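/- Let σ(x) = x². With Ω as in the teacher-student setting and Q⊥ = Q − M P⁻¹ Mᵀ, the orthogonal update function Ψ⊥(Ω), defined entrywise by Ψ⊥_{ij}(Ω) = E[(σ'(λ_i) λ⊥_j + σ'(λ_j) λ⊥_i) E] with (λ, λ⊥, λ*) centered Gaussian with covariance [[Q, Q⊥, M],[Q⊥, Q⊥, 0],[Mᵀ, 0, P]] and E = (1/k)Σ_r (λ*_r)² − (1/p)Σ_l λ_l², equals 4(Tr(P)/k − Tr(Q)/p) Q⊥ − (4/p)(Q Q⊥ + Q⊥ Q). -/

import Mathlib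

/-!
Write the Gaussian vector as `y = A x` with `x` standard. Isserlis' theorem
`E[y_a y_b y_c y_d] = S_ab S_cd + S_ac S_bd + S_ad S_bc` for `S = A Aᵀ` follows by multilinearity
from the standard case, where the monomial factorises over the independent coordinates and only the
moments `E x² = 1`, `E x³ = 0`, `E x⁴ = 3` enter (read off the mgf `exp (t² / 2)`). Since `E` is the
diagonal quadratic form `∑_w c_w y_w²`, each half of `Ψ⊥_ij` equals
`∑_w c_w (S_ab S_ww + 2 S_aw S_bw)`, and reading `S` off the block covariance gives the formula.
-/

open MeasureTheory ProbabilityTheory Real Matrix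

lemma deriv_mul_exp_half_sq {q q' : ℝ → ℝ} (hq : ∀ t, HasDerivAt q (q' t) t) :
    deriv (fun t => q t * exp (t ^ 2 / 2)) = fun t => (q' t + t * q t) * exp (t ^ 2 / 2) := by
  ext t
  rw [((hq t).fun_mul ((hasDerivAt_pow 2 t).div_const 2).exp).deriv]
  ring

lemma integral_pow_gaussianReal_eq_iteratedDeriv (n : ℕ) :
    ∫ x, x ^ n ∂gaussianReal 0 1 = iteratedDeriv n (fun t => exp (t ^ 2 / 2)) 0 := by
  have h := iteratedDeriv_mgf_zero (X := fun x => x) (μ := gaussianReal 0 1) (by simp) n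
  simp_all [mgf_fun_id_gaussianReal]

lemma integral_pow_gaussianReal_two_three_four :
    ∫ x, x ^ 2 ∂gaussianReal 0 1 = 1 ∧ ∫ x, x ^ 3 ∂gaussianReal 0 1 = 0 ∧
      ∫ x, x ^ 4 ∂gaussianReal 0 1 = 3 := by
  have h1 : deriv (fun t : ℝ => exp (t ^ 2 / 2)) = fun t => t * exp (t ^ 2 / 2) := by
    simpa using deriv_mul_exp_half_sq (q := fun _ => 1) fun t => hasDerivAt_const t 1
  have h2 : deriv (fun t : ℝ => t * exp (t ^ 2 / 2)) = fun t => (1 + t ^ 2) * exp (t ^ 2 / 2) := by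
    simpa [sq] using deriv_mul_exp_half_sq hasDerivAt_id
  have h3 : deriv (fun t : ℝ => (1 + t ^ 2) * exp (t ^ 2 / 2))
      = fun t => (3 * t + t ^ 3) * exp (t ^ 2 / 2) := by
    rw [deriv_mul_exp_half_sq fun t => (hasDerivAt_pow 2 t).const_add 1]
    ext t; ring
  have h4 : deriv (fun t : ℝ => (3 * t + t ^ 3) * exp (t ^ 2 / 2))
      = fun t => (3 + 6 * t ^ 2 + t ^ 4) * exp (t ^ 2 / 2) := by
    rw [deriv_mul_exp_half_sq (q := fun t => 3 * t + t ^ 3)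
      fun t => ((hasDerivAt_id' t).const_mul 3).fun_add (hasDerivAt_pow 3 t)]
    ext t; ring
  simp [integral_pow_gaussianReal_eq_iteratedDeriv, iteratedDeriv_succ', h1, h2, h3, h4]

lemma integrable_pow_gaussianReal (n : ℕ) : Integrable (fun x => x ^ n) (gaussianReal 0 1) :=
  integrable_pow_of_mem_interior_integrableExpSet (X := fun x => x) (by simp) n

section StdGaussian

variable {ι : Type*} [Fintype ι]

lemma mul_mul_mul_eq_prod_pow_count [DecidableEq ι] (x : ι → ℝ) (a b c d : ι) :
    x a * x b * x c * x d = ∏ t, x t ^ Multiset.count t {a, b, c, d} := by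
  calc x a * x b * x c * x d = (Multiset.map x {a, b, c, d}).prod := by simp [mul_assoc]
    _ = _ := by
      rw [Finset.prod_multiset_map_count]
      exact Finset.prod_subset (Finset.subset_univ _) fun t _ ht => by
        rw [Multiset.count_eq_zero_of_notMem (by simpa using ht), pow_zero]

lemma prod_integral_pow_count_gaussianReal [DecidableEq ι] (a b c d : ι) :
    ∏ t, ∫ y, y ^ Multiset.count t {a, b, c, d} ∂gaussianReal 0 1
      = (1 : Matrix ι ι ℝ) a b * (1 : Matrix ι ι ℝ) c d
        + (1 : Matrix ι ι ℝ) a c * (1 : Matrix ι ι ℝ) b d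
        + (1 : Matrix ι ι ℝ) a d * (1 : Matrix ι ι ℝ) b c := by
  obtain ⟨h2, h3, h4⟩ := integral_pow_gaussianReal_two_three_four
  rw [← Finset.prod_subset (Finset.subset_univ ({a, b, c, d} : Multiset ι).toFinset)
    fun t _ ht => by rw [Multiset.count_eq_zero_of_notMem (Multiset.mem_toFinset.not.mp ht)]; simp]
  by_cases hab : a = b <;> by_cases hac : a = c <;> by_cases had : a = d <;>
    by_cases hbc : b = c <;> by_cases hbd : b = d <;> by_cases hcd : c = d <;> subst_vars <;>
    simp [Finset.prod_insert, Multiset.count_cons, Ne.symm, *] <;> norm_num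

lemma integrable_mul_mul_mul_stdGaussian (a b c d : ι) :
    Integrable (fun x : ι → ℝ => x a * x b * x c * x d) (Measure.pi fun _ => gaussianReal 0 1) := by
  classical
  simp_rw [mul_mul_mul_eq_prod_pow_count]
  exact Integrable.fintype_prod (f := fun t y => y ^ _) fun t => integrable_pow_gaussianReal _

lemma integral_mul_mul_mul_stdGaussian [DecidableEq ι] (a b c d : ι) :
    ∫ x : ι → ℝ, x a * x b * x c * x d ∂(Measure.pi fun _ => gaussianReal 0 1)
      = (1 : Matrix ι ι ℝ) a b * (1 : Matrix ι ι ℝ) c d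
        + (1 : Matrix ι ι ℝ) a c * (1 : Matrix ι ι ℝ) b d
        + (1 : Matrix ι ι ℝ) a d * (1 : Matrix ι ι ℝ) b c := by
  simp_rw [mul_mul_mul_eq_prod_pow_count]
  rw [integral_fintype_prod_eq_prod (fun t y => y ^ _), prod_integral_pow_count_gaussianReal]

end StdGaussian

section LinearImage

variable {ι κ : Type*} [Fintype ι]

lemma mulVec_mul_mul_mul_eq_sum (A : Matrix κ ι ℝ) (x : ι → ℝ) (a b c d : κ) :
    (A *ᵥ x) a * (A *ᵥ x) b * (A *ᵥ x) c * (A *ᵥ x) d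
      = ∑ q : ι × ι × ι × ι, A a q.1 * A b q.2.1 * A c q.2.2.1 * A d q.2.2.2
          * (x q.1 * x q.2.1 * x q.2.2.1 * x q.2.2.2) := by
  -- grouped so that the four sums fold back into the four factors
  have h (q : ι × ι × ι × ι) : A a q.1 * A b q.2.1 * A c q.2.2.1 * A d q.2.2.2
      * (x q.1 * x q.2.1 * x q.2.2.1 * x q.2.2.2) = A a q.1 * x q.1 * (A b q.2.1 * x q.2.1)
      * (A c q.2.2.1 * x q.2.2.1) * (A d q.2.2.2 * x q.2.2.2) := by ring
  simp only [h, Fintype.sum_prod_type, ← Finset.mul_sum, ← Finset.sum_mul]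
  rfl

lemma sum_mul_pairings_one [DecidableEq ι] (A : Matrix κ ι ℝ) (a b c d : κ) :
    ∑ q : ι × ι × ι × ι, A a q.1 * A b q.2.1 * A c q.2.2.1 * A d q.2.2.2
      * ((1 : Matrix ι ι ℝ) q.1 q.2.1 * (1 : Matrix ι ι ℝ) q.2.2.1 q.2.2.2
        + (1 : Matrix ι ι ℝ) q.1 q.2.2.1 * (1 : Matrix ι ι ℝ) q.2.1 q.2.2.2
        + (1 : Matrix ι ι ℝ) q.1 q.2.2.2 * (1 : Matrix ι ι ℝ) q.2.1 q.2.2.1)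
      = (A * Aᵀ) a b * (A * Aᵀ) c d + (A * Aᵀ) a c * (A * Aᵀ) b d
        + (A * Aᵀ) a d * (A * Aᵀ) b c := by
  simp only [Fintype.sum_prod_type, mul_add, Finset.sum_add_distrib, one_apply, mul_ite, mul_one,
    mul_zero, Finset.sum_ite_eq, Finset.sum_ite_irrel, Finset.sum_const_zero,
    Finset.mem_univ, if_true, mul_apply, transpose_apply, Finset.sum_mul_sum]
  simp only [mul_comm, mul_left_comm]

lemma measurable_mulVec (A : Matrix κ ι ℝ) : Measurable A.mulVec :=
  measurable_pi_lambda _ fun _ => by simp only [mulVec, dotProduct]; fun_prop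

lemma integrable_map_mulVec_mul_mul_mul (A : Matrix κ ι ℝ) (a b c d : κ) :
    Integrable (fun y : κ → ℝ => y a * y b * y c * y d)
      ((Measure.pi fun _ : ι => gaussianReal 0 1).map A.mulVec) := by
  rw [integrable_map_measure (by fun_prop) (measurable_mulVec A).aemeasurable]
  simp only [Function.comp_def, mulVec_mul_mul_mul_eq_sum]
  exact integrable_finsetSum _ fun q _ =>
    (integrable_mul_mul_mul_stdGaussian q.1 q.2.1 q.2.2.1 q.2.2.2).const_mul _

theorem integral_map_mulVec_mul_mul_mul (A : Matrix κ ι ℝ) (a b c d : κ) :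
    ∫ y, y a * y b * y c * y d ∂((Measure.pi fun _ : ι => gaussianReal 0 1).map A.mulVec)
      = (A * Aᵀ) a b * (A * Aᵀ) c d + (A * Aᵀ) a c * (A * Aᵀ) b d
        + (A * Aᵀ) a d * (A * Aᵀ) b c := by
  classical
  rw [integral_map (measurable_mulVec A).aemeasurable (by fun_prop)]
  simp only [mulVec_mul_mul_mul_eq_sum]
  rw [integral_finsetSum _ fun q _ =>
    (integrable_mul_mul_mul_stdGaussian q.1 q.2.1 q.2.2.1 q.2.2.2).const_mul _]
  simp only [integral_const_mul, integral_mul_mul_mul_stdGaussian, sum_mul_pairings_one]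

lemma mul_mul_sum_mul_sq_eq_sum [Fintype κ] (y c : κ → ℝ) (a b : κ) :
    y a * y b * ∑ w, c w * y w ^ 2 = ∑ w, c w * (y a * y b * y w * y w) := by
  rw [Finset.mul_sum]; exact Finset.sum_congr rfl fun w _ => by ring

lemma integrable_map_mulVec_mul_mul_sum_mul_sq [Fintype κ] (A : Matrix κ ι ℝ) (a b : κ)
    (c : κ → ℝ) :
    Integrable (fun y : κ → ℝ => y a * y b * ∑ w, c w * y w ^ 2)
      ((Measure.pi fun _ : ι => gaussianReal 0 1).map A.mulVec) := by
  simp only [mul_mul_sum_mul_sq_eq_sum]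
  exact integrable_finsetSum _ fun w _ => (integrable_map_mulVec_mul_mul_mul A a b w w).const_mul _

lemma integral_map_mulVec_mul_mul_sum_mul_sq [Fintype κ] (A : Matrix κ ι ℝ) (a b : κ)
    (c : κ → ℝ) :
    ∫ y, y a * y b * ∑ w, c w * y w ^ 2
        ∂((Measure.pi fun _ : ι => gaussianReal 0 1).map A.mulVec)
      = ∑ w, c w * ((A * Aᵀ) a b * (A * Aᵀ) w w + 2 * ((A * Aᵀ) a w * (A * Aᵀ) b w)) := by
  simp only [mul_mul_sum_mul_sq_eq_sum]
  rw [integral_finsetSum _ fun w _ => (integrable_map_mulVec_mul_mul_mul A a b w w).const_mul _]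
  simp only [integral_const_mul, integral_map_mulVec_mul_mul_mul]
  exact Finset.sum_congr rfl fun w _ => by ring

end LinearImage

theorem squared_activation_PsiPerp_formula_general
    {p k : ℕ}
    (Q Qperp : Matrix (Fin p) (Fin p) ℝ) (M : Matrix (Fin p) (Fin k) ℝ)
    (P : Matrix (Fin k) (Fin k) ℝ)
    (A : Matrix ((Fin p ⊕ Fin p) ⊕ Fin k) ((Fin p ⊕ Fin p) ⊕ Fin k) ℝ)
    (hA : A * Aᵀ = Matrix.fromBlocks
      (Matrix.fromBlocks Q Qperp Qperp Qperp)
      (Matrix.fromRows M 0)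
      (Matrix.fromCols Mᵀ 0) P)
    (μ : Measure ((Fin p ⊕ Fin p) ⊕ Fin k → ℝ))
    (hμ : μ = (Measure.pi fun _ : (Fin p ⊕ Fin p) ⊕ Fin k => gaussianReal 0 1).map A.mulVec)
    (E : ((Fin p ⊕ Fin p) ⊕ Fin k → ℝ) → ℝ)
    (hE : ∀ v, E v = (k : ℝ)⁻¹ * ∑ r, (v (Sum.inr r)) ^ 2
        - (p : ℝ)⁻¹ * ∑ l, (v (Sum.inl (Sum.inl l))) ^ 2) :
    ∀ (i j : Fin p),
      ∫ v, (2 * v (Sum.inl (Sum.inl i)) * v (Sum.inl (Sum.inr j))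
          + 2 * v (Sum.inl (Sum.inl j)) * v (Sum.inl (Sum.inr i))) * E v ∂μ
        = 4 * (P.trace / k - Q.trace / p) * Qperp i j
          - 4 / p * (Q * Qperp + Qperp * Q) i j := by
  intro i j
  subst hμ
  set c : (Fin p ⊕ Fin p) ⊕ Fin k → ℝ :=
    Sum.elim (Sum.elim (fun _ => -(p : ℝ)⁻¹) 0) fun _ => (k : ℝ)⁻¹
  have hEc : E = fun v => ∑ w, c w * v w ^ 2 := by
    ext v
    simp [hE, c, Fintype.sum_sum_type, Finset.mul_sum, sub_eq_add_neg, add_comm]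
  have hsymm (u w) : (A * Aᵀ) u w = (A * Aᵀ) w u := (isSymm_mul_transpose_self A).apply w u
  have hQ (l m : Fin p) : Q l m = Q m l := by
    simpa [hA] using hsymm (.inl (.inl l)) (.inl (.inl m))
  have hQperp (l m : Fin p) : Qperp l m = Qperp m l := by
    simpa [hA] using hsymm (.inl (.inl l)) (.inl (.inr m))
  have hassoc (x y z : ℝ) : 2 * x * y * z = 2 * (x * y * z) := by ring
  simp only [hEc, add_mul, hassoc]
  rw [integral_add ((integrable_map_mulVec_mul_mul_sum_mul_sq A _ _ c).const_mul 2)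
    ((integrable_map_mulVec_mul_mul_sum_mul_sq A _ _ c).const_mul 2), integral_const_mul,
    integral_const_mul, integral_map_mulVec_mul_mul_sum_mul_sq,
    integral_map_mulVec_mul_mul_sum_mul_sq, hA]
  simp only [c, Fintype.sum_sum_type, fromBlocks_apply₁₁, fromBlocks_apply₁₂, fromBlocks_apply₂₁,
    fromBlocks_apply₂₂, fromRows_apply_inl, fromRows_apply_inr, Sum.elim_inl, Sum.elim_inr,
    Pi.zero_apply, Matrix.zero_apply, zero_mul, mul_zero, add_zero, Finset.sum_const_zero,
    neg_mul, Finset.sum_neg_distrib, trace, diag_apply, Matrix.add_apply, mul_apply, hQperp j, hQ j,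
    mul_comm (Q _ j), mul_add, Finset.sum_add_distrib, ← Finset.mul_sum]
  ring

/-- For the square activation (`σ'(x) = 2x`) and a centered Gaussian vector
`(λ, λ⊥, λ*)` with covariance `[[Q, Q⊥, M],[Q⊥, Q⊥, 0],[Mᵀ, 0, P]]` (where
`Q⊥ = Q − M P⁻¹ Mᵀ`), the orthogonal update
`Ψ⊥_{ij}(Ω) = E[(σ'(λ_i) λ⊥_j + σ'(λ_j) λ⊥_i) E]` with
`E = (1/k) Σ_r (λ*_r)² − (1/p) Σ_l λ_l²` equals
`4(Tr(P)/k − Tr(Q)/p) Q⊥ − (4/p)(Q Q⊥ + Q⊥ Q)`. -/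
theorem squared_activation_PsiPerp_formula
    {p k : ℕ} (hp : 0 < p) (hk : 0 < k)
    (Q Qperp : Matrix (Fin p) (Fin p) ℝ) (M : Matrix (Fin p) (Fin k) ℝ)
    (P : Matrix (Fin k) (Fin k) ℝ) (hP : P.PosDef)
    (hQperp : Qperp = Q - M * P⁻¹ * Mᵀ)
    (A : Matrix ((Fin p ⊕ Fin p) ⊕ Fin k) ((Fin p ⊕ Fin p) ⊕ Fin k) ℝ)
    (hA : A * Aᵀ = Matrix.fromBlocks
      (Matrix.fromBlocks Q Qperp Qperp Qperp)
      (Matrix.fromRows M 0)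
      (Matrix.fromCols Mᵀ 0) P)
    (μ : Measure ((Fin p ⊕ Fin p) ⊕ Fin k → ℝ))
    (hμ : μ = (Measure.pi fun _ : (Fin p ⊕ Fin p) ⊕ Fin k => gaussianReal 0 1).map A.mulVec)
    (E : ((Fin p ⊕ Fin p) ⊕ Fin k → ℝ) → ℝ)
    (hE : ∀ v, E v = (k : ℝ)⁻¹ * ∑ r, (v (Sum.inr r)) ^ 2
        - (p : ℝ)⁻¹ * ∑ l, (v (Sum.inl (Sum.inl l))) ^ 2) :
    ∀ (i j : Fin p),
      ∫ v, (2 * v (Sum.inl (Sum.inl i)) * v (Sum.inl (Sum.inr j))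
          + 2 * v (Sum.inl (Sum.inl j)) * v (Sum.inl (Sum.inr i))) * E v ∂μ
        = 4 * (P.trace / k - Q.trace / p) * Qperp i j
          - 4 / p * (Q * Qperp + Qperp * Q) i j :=
  squared_activation_PsiPerp_formula_general Q Qperp M P A hA μ hμ E hE
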